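/- In any skew lattice S: (a) if x L y and x R y then x = y; (b) if x D y, then the element z = x∧y satisfies z R x and z L y. Consequently the map x ↦ ([x]_L, [x]_R) is an isomorphism of S onto the fibered product of S/L and S/R over S/D. -/

import Mathlib

/-- Green's relation R on a skew lattice (`mt` = ∧): x R y iff x∧y = y and y∧x = x. -/
def GreenR {S : Type*} (mt : S → S → S) (x y : S) : Prop :=
  mt x y = y ∧ mt y x = x

/-- Green's relation L on a skew lattice (`mt` = ∧): x L y iff x∧y = x and y∧x = y. -/
def GreenL {S : Type*} (mt : S → S → S) (x y : S) : Prop :=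
  mt x y = x ∧ mt y x = y

/-- Green's relation D on a skew lattice (`mt` = ∧): x D y iff x∧y∧x = x and y∧x∧y = y. -/
def GreenD {S : Type*} (mt : S → S → S) (x y : S) : Prop :=
  mt (mt x y) x = x ∧ mt (mt y x) y = y

/-!
Only the meet matters, and it makes `S` a band: idempotence comes from absorption,
`x ∧ x = x ∧ (x ∨ (x ∧ x)) = x`. In a band `L` and `R` are transitive, so any `x` with
`x L a` and `x R b` is both `L`- and `R`-related to `b ∧ a`, hence equal to it.
-/

theorem mt_self_of_absorption {S : Type*} {mt jn : S → S → S}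
    (abs2 : ∀ x y : S, mt x (jn x y) = x) (abs4 : ∀ x y : S, jn x (mt x y) = x) (x : S) :
    mt x x = x := by
  calc mt x x = mt x (jn x (mt x x)) := by rw [abs4]
    _ = x := abs2 _ _

section Green

variable {S : Type*} {mt : S → S → S} {x y z : S}

theorem eq_of_greenL_of_greenR (hL : GreenL mt x y) (hR : GreenR mt x y) : x = y :=
  hL.1.symm.trans hR.1

theorem GreenL.symm (h : GreenL mt x y) : GreenL mt y x := ⟨h.2, h.1⟩

theorem GreenR.symm (h : GreenR mt x y) : GreenR mt y x := ⟨h.2, h.1⟩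

theorem GreenD.symm (h : GreenD mt x y) : GreenD mt y x := ⟨h.2, h.1⟩

variable (mt_assoc : ∀ x y z : S, mt x (mt y z) = mt (mt x y) z)
include mt_assoc

theorem GreenL.trans (hxy : GreenL mt x y) (hyz : GreenL mt y z) : GreenL mt x z := by
  constructor
  · calc mt x z = mt (mt x y) z := by rw [hxy.1]
      _ = x := by rw [← mt_assoc, hyz.1, hxy.1]
  · calc mt z x = mt (mt z y) x := by rw [hyz.2]
      _ = z := by rw [← mt_assoc, hxy.2, hyz.2]

theorem GreenR.trans (hxy : GreenR mt x y) (hyz : GreenR mt y z) : GreenR mt x z := by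
  constructor
  · calc mt x z = mt x (mt y z) := by rw [hyz.1]
      _ = z := by rw [mt_assoc, hxy.1, hyz.1]
  · calc mt z x = mt z (mt y x) := by rw [hxy.2]
      _ = x := by rw [mt_assoc, hyz.2, hxy.2]

theorem GreenD.greenL_mt (mt_self : ∀ x : S, mt x x = x) (h : GreenD mt x y) :
    GreenL mt (mt x y) y :=
  ⟨by rw [← mt_assoc, mt_self], by rw [mt_assoc, h.2]⟩

theorem GreenD.greenR_mt (mt_self : ∀ x : S, mt x x = x) (h : GreenD mt x y) :
    GreenR mt (mt x y) x :=
  ⟨h.1, by rw [mt_assoc, mt_self]⟩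

end Green

theorem skew_lattice_fibered_product_decomposition_general
    {S : Type*} (mt jn : S → S → S)
    (mt_assoc : ∀ x y z : S, mt x (mt y z) = mt (mt x y) z)
    (abs2 : ∀ x y : S, mt x (jn x y) = x)
    (abs4 : ∀ x y : S, jn x (mt x y) = x) :
    (∀ x y : S, GreenL mt x y → GreenR mt x y → x = y)
    ∧
    (∀ x y : S, GreenD mt x y → GreenR mt (mt x y) x ∧ GreenL mt (mt x y) y)
    ∧
    (∀ a b : S, GreenD mt a b → ∃! x : S, GreenL mt x a ∧ GreenR mt x b) := by
  have mt_self := mt_self_of_absorption abs2 abs4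
  refine ⟨fun x y => eq_of_greenL_of_greenR,
    fun x y hD => ⟨hD.greenR_mt mt_assoc mt_self, hD.greenL_mt mt_assoc mt_self⟩, fun a b hD => ?_⟩
  have hL : GreenL mt (mt b a) a := hD.symm.greenL_mt mt_assoc mt_self
  have hR : GreenR mt (mt b a) b := hD.symm.greenR_mt mt_assoc mt_self
  refine ⟨mt b a, ⟨hL, hR⟩, fun x ⟨hxa, hxb⟩ => ?_⟩
  exact eq_of_greenL_of_greenR (hxa.trans mt_assoc hL.symm) (hxb.trans mt_assoc hR.symm)

/-- In any skew lattice: (a) L ∩ R is trivial; (b) if x D y then z = x∧y satisfies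
z R x and z L y; consequently, inside each D-class, each pair consisting of an L-class
and an R-class meets in exactly one element: for all a D b there is a unique x with
x L a and x R b — i.e. x ↦ ([x]_L, [x]_R) is an isomorphism of S onto the fibered
product of S/L and S/R over S/D. Here `mt` is ∧ and `jn` is ∨. -/
theorem skew_lattice_fibered_product_decomposition
    {S : Type*} (mt jn : S → S → S)
    (mt_assoc : ∀ x y z : S, mt x (mt y z) = mt (mt x y) z)
    (jn_assoc : ∀ x y z : S, jn x (jn y z) = jn (jn x y) z)
    (abs1 : ∀ x y : S, jn (mt y x) x = x)
    (abs2 : ∀ x y : S, mt x (jn x y) = x)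
    (abs3 : ∀ x y : S, mt (jn y x) x = x)
    (abs4 : ∀ x y : S, jn x (mt x y) = x) :
    (∀ x y : S, GreenL mt x y → GreenR mt x y → x = y)
    ∧
    (∀ x y : S, GreenD mt x y → GreenR mt (mt x y) x ∧ GreenL mt (mt x y) y)
    ∧
    (∀ a b : S, GreenD mt a b → ∃! x : S, GreenL mt x a ∧ GreenR mt x b) :=
  skew_lattice_fibered_product_decomposition_general mt jn mt_assoc abs2 abs4
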